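/- Let S be a separable metrizable space. For each N ≥ 1, let X^{N,1}, …, X^{N,N} be an exchangeable family of S-valued random variables with empirical measure μ^N := (1/N) ∑_{i=1}^N δ_{X^{N,i}}, viewed as a random element of the space of Borel probability measures on S with the topology of weak convergence. Let μ be a random Borel probability measure on S and assume E[F(μ^N)] → E[F(μ)] as N → ∞ for every bounded continuous F on the space of probability measures on S. Then for every k ≥ 1 and all bounded continuous g_1, …, g_k : S → ℝ, lim_{N→∞} E[ ∏_{i=1}^k g_i(X^{N,i}) ] = E[ ∏_{i=1}^k ∫_S g_i dμ ]; that is, the law of (X^{N,1},…,X^{N,k}) converges weakly to the mixture ∫ m^{⊗k} Q(dm), where Q is the law of μ. -/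

import Mathlib

/-!
Expanding the product, `∏_{i<k} ∫ g_i dμ^N` is the average over all maps `p : Fin k → Fin N`
of `∏_{i<k} g_i (X^{N,p(i)})`. By exchangeability every injective `p` has the same expectation
as the identity map, and the non-injective maps form a fraction `1 - N(N-1)⋯(N-k+1)/N^k → 0`
of all maps, each contributing an error of at most `2 ∏ ‖g_i‖`. So `E[∏ g_i(X^{N,i})]` and
`E[∏ ∫ g_i dμ^N]` have the same limit, which is `E[∏ ∫ g_i dμ]` by the assumed convergence
applied to the bounded continuous function `π ↦ ∏ ∫ g_i dπ`.
-/

open MeasureTheory Filter Topology Set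
open scoped ENNReal BoundedContinuousFunction
open Function

theorem Equiv.Perm.exists_comp_eq_of_injective {α β : Type*} [Finite β] {p q : α → β}
    (hp : Injective p) (hq : Injective q) : ∃ σ : Equiv.Perm β, ∀ a, σ (q a) = p a := by
  classical
  refine ⟨((Equiv.ofInjective q hq).symm.trans (Equiv.ofInjective p hp)).extendSubtype,
    fun a => ?_⟩
  rw [Equiv.extendSubtype_apply_of_mem _ _ ⟨a, rfl⟩, Equiv.trans_apply]
  have : (⟨q a, ⟨a, rfl⟩⟩ : Set.range q) = Equiv.ofInjective q hq a := rfl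
  rw [this, Equiv.symm_apply_apply, Equiv.ofInjective_apply]

theorem Fin.card_filter_injective (k N : ℕ) :
    (Finset.univ.filter fun p : Fin k → Fin N => Injective p).card = N.descFactorial k := by
  rw [← Fintype.card_subtype, Fintype.card_congr (Equiv.subtypeInjectiveEquivEmbedding _ _),
    Fintype.card_embedding_eq, Fintype.card_fin, Fintype.card_fin]

theorem Fin.card_filter_not_injective (k N : ℕ) :
    ((Finset.univ.filter fun p : Fin k → Fin N => ¬ Injective p).card : ℝ) =
      N ^ k - N.descFactorial k := by
  rw [eq_sub_iff_add_eq, ← Fin.card_filter_injective, ← Nat.cast_add, add_comm,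
    Finset.card_filter_add_card_filter_not]
  simp

theorem norm_sub_mean_le_of_eq_on_injective {k N : ℕ} (hN : 0 < N)
    {T : (Fin k → Fin N) → ℝ} {a D : ℝ} (hinj : ∀ p, Injective p → T p = a)
    (hD : ∀ p, ‖a - T p‖ ≤ D) :
    ‖a - ((N : ℝ) ^ k)⁻¹ * ∑ p, T p‖ ≤ D * (1 - N.descFactorial k / N ^ k) := by
  have hNk : (0 : ℝ) < (N : ℝ) ^ k := by positivity
  have hsplit : a - ((N : ℝ) ^ k)⁻¹ * ∑ p, T p =
      ((N : ℝ) ^ k)⁻¹ * ∑ p with ¬ Injective p, (a - T p) := by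
    rw [Finset.sum_filter_of_ne fun p _ hp => by_contra fun h => hp (by
      rw [hinj p (not_not.1 h), sub_self])]
    simp only [Finset.sum_sub_distrib, Finset.sum_const, Finset.card_univ, Fintype.card_pi,
      Fintype.card_fin, Finset.prod_const, nsmul_eq_mul, Nat.cast_pow]
    field_simp
  calc ‖a - ((N : ℝ) ^ k)⁻¹ * ∑ p, T p‖
      ≤ ((N : ℝ) ^ k)⁻¹ * ∑ p with ¬ Injective p, ‖a - T p‖ := by
        rw [hsplit, norm_mul, Real.norm_of_nonneg (by positivity)]
        gcongr
        exact norm_sum_le _ _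
    _ ≤ ((N : ℝ) ^ k)⁻¹ * ((N ^ k - N.descFactorial k) * D) := by
        gcongr
        rw [← Fin.card_filter_not_injective, ← nsmul_eq_mul]
        exact Finset.sum_le_card_nsmul _ _ _ fun p _ => hD p
    _ = D * (1 - N.descFactorial k / N ^ k) := by
        field_simp

theorem tendsto_descFactorial_div_pow (k : ℕ) :
    Tendsto (fun N : ℕ => (N.descFactorial k : ℝ) / N ^ k) atTop (𝓝 1) :=
  (Asymptotics.isEquivalent_iff_tendsto_one
    (eventually_gt_atTop 0 |>.mono fun N hN => by positivity)).1
    (isEquivalent_descFactorial k)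

noncomputable def empiricalMeasure {S : Type*} [MeasurableSpace S] (N : ℕ) (x : ℕ → S) :
    Measure S :=
  (N : ℝ≥0∞)⁻¹ • ∑ i ∈ Finset.range N, Measure.dirac (x i)

theorem integral_empiricalMeasure {S E : Type*} [MeasurableSpace S] [NormedAddCommGroup E]
    [NormedSpace ℝ E] [CompleteSpace E] (N : ℕ) (x : ℕ → S) {f : S → E}
    (hf : StronglyMeasurable f) :
    ∫ y, f y ∂empiricalMeasure N x = (N : ℝ)⁻¹ • ∑ j : Fin N, f (x j) := by
  rw [empiricalMeasure, integral_smul_measure, integral_finsetSum_measure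
    fun j _ => integrable_dirac' hf (by simp), Fin.sum_univ_eq_sum_range (fun j => f (x j))]
  simp [integral_dirac' _ _ hf]

theorem BoundedContinuousFunction.norm_prod_apply_le {ι S : Type*} [Fintype ι]
    [TopologicalSpace S] (G : ι → S →ᵇ ℝ) (y : ι → S) :
    ‖∏ i, G i (y i)‖ ≤ ∏ i, ‖G i‖ := by
  rw [norm_prod]
  exact Finset.prod_le_prod (fun _ _ => norm_nonneg _) fun i _ => (G i).norm_coe_le_norm _

section Exchangeable

variable {S Ω : Type*} [MeasurableSpace S] [MeasurableSpace Ω] {P : Measure Ω} {N : ℕ}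
  {X : ℕ → Ω → S}

theorem integral_comp_perm_of_exchangeable {E : Type*} [NormedAddCommGroup E] [NormedSpace ℝ E]
    (hX : ∀ i < N, Measurable (X i))
    (hexch : ∀ σ : Equiv.Perm (Fin N),
      P.map (fun ω (i : Fin N) => X (σ i) ω) = P.map (fun ω (i : Fin N) => X i ω))
    (σ : Equiv.Perm (Fin N)) {H : (Fin N → S) → E} (hH : StronglyMeasurable H) :
    ∫ ω, H (fun i => X (σ i) ω) ∂P = ∫ ω, H (fun i => X i ω) ∂P := by
  have hmeas (τ : Fin N → Fin N) : Measurable fun ω i => X (τ i) ω :=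
    measurable_pi_lambda _ fun i => hX _ (τ i).isLt
  rw [← integral_map (hmeas σ).aemeasurable hH.aestronglyMeasurable, hexch σ,
    integral_map (hmeas fun i => i).aemeasurable hH.aestronglyMeasurable]

theorem integral_prod_comp_injective_of_exchangeable (hX : ∀ i < N, Measurable (X i))
    (hexch : ∀ σ : Equiv.Perm (Fin N),
      P.map (fun ω (i : Fin N) => X (σ i) ω) = P.map (fun ω (i : Fin N) => X i ω))
    {k : ℕ} (hkN : k ≤ N) {g : Fin k → S → ℝ} (hg : ∀ i, Measurable (g i))
    {p : Fin k → Fin N} (hp : Injective p) :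
    ∫ ω, ∏ i, g i (X (p i) ω) ∂P = ∫ ω, ∏ i : Fin k, g i (X i ω) ∂P := by
  obtain ⟨σ, hσ⟩ := Equiv.Perm.exists_comp_eq_of_injective hp (Fin.castLE_injective hkN)
  have hH : Measurable fun v : Fin N → S => ∏ i, g i (v (Fin.castLE hkN i)) :=
    Finset.measurable_prod _ fun i _ => (hg i).comp (measurable_pi_apply _)
  simpa [hσ] using integral_comp_perm_of_exchangeable hX hexch σ hH.stronglyMeasurable

variable [TopologicalSpace S] [OpensMeasurableSpace S]

theorem norm_integral_prod_sub_integral_prod_empiricalMeasure_le [IsProbabilityMeasure P]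
    (hX : ∀ i < N, Measurable (X i))
    (hexch : ∀ σ : Equiv.Perm (Fin N),
      P.map (fun ω (i : Fin N) => X (σ i) ω) = P.map (fun ω (i : Fin N) => X i ω))
    {k : ℕ} (hkN : k ≤ N) (hN : 0 < N) (G : Fin k → S →ᵇ ℝ) :
    ‖∫ ω, ∏ i, G i (X i ω) ∂P - ∫ ω, ∏ i, ∫ x, G i x ∂empiricalMeasure N (X · ω) ∂P‖ ≤
      2 * (∏ i, ‖G i‖) * (1 - N.descFactorial k / N ^ k) := by
  set T : (Fin k → Fin N) → ℝ := fun p => ∫ ω, ∏ i, G i (X (p i) ω) ∂P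
  have hprod (p : Fin k → Fin N) : ∀ᵐ ω ∂P, ‖∏ i, G i (X (p i) ω)‖ ≤ ∏ i, ‖G i‖ :=
    .of_forall fun ω => BoundedContinuousFunction.norm_prod_apply_le G fun i => X (p i) ω
  have hbound (p : Fin k → Fin N) : ‖T p‖ ≤ ∏ i, ‖G i‖ := by
    simpa using norm_integral_le_of_norm_le_const (hprod p)
  have hint (p : Fin k → Fin N) : Integrable (fun ω => ∏ i, G i (X (p i) ω)) P :=
    .of_bound (Finset.measurable_prod _ fun i _ =>
      (G i).continuous.measurable.comp (hX _ (p i).isLt)).aestronglyMeasurable _ (hprod p)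
  have hexpand : ∫ ω, ∏ i, ∫ x, G i x ∂empiricalMeasure N (X · ω) ∂P =
      ((N : ℝ) ^ k)⁻¹ * ∑ p, T p := by
    simp_rw [integral_empiricalMeasure _ _ (G _).continuous.stronglyMeasurable, smul_eq_mul,
      Finset.prod_mul_distrib, Fintype.prod_sum]
    rw [integral_const_mul, integral_finsetSum _ fun p _ => hint p]
    simp [T]
  rw [hexpand, two_mul]
  refine norm_sub_mean_le_of_eq_on_injective hN
    (fun p hp => integral_prod_comp_injective_of_exchangeable hX hexch hkN
      (fun i => (G i).continuous.measurable) hp)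
    fun p => (norm_sub_le _ _).trans (add_le_add ?_ (hbound p))
  simpa [T] using hbound (Fin.castLE hkN)

end Exchangeable

theorem stmt9_general {S : Type*} [MeasurableSpace S] [TopologicalSpace S] [BorelSpace S]
    (ΩN : ℕ → Type*) [∀ N, MeasurableSpace (ΩN N)]
    (P : ∀ N, Measure (ΩN N)) [∀ N, IsProbabilityMeasure (P N)]
    (X : ∀ N : ℕ, ℕ → ΩN N → S)
    (hXmeas : ∀ N, ∀ i < N, Measurable (X N i))
    (hexch : ∀ N (σ : Equiv.Perm (Fin N)),
      Measure.map (fun ω (i : Fin N) => X N (σ i : ℕ) ω) (P N) =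
        Measure.map (fun ω (i : Fin N) => X N (i : ℕ) ω) (P N))
    (μN : ∀ N : ℕ, ΩN N → ProbabilityMeasure S)
    (hμN : ∀ N : ℕ, 0 < N → ∀ ω, (μN N ω : Measure S) =
      (N : ℝ≥0∞)⁻¹ • ∑ i ∈ Finset.range N, Measure.dirac (X N i ω))
    {Ω' : Type*} [MeasurableSpace Ω'] (P' : Measure Ω') [IsProbabilityMeasure P']
    (μ : Ω' → ProbabilityMeasure S)
    (hconv : ∀ F : ProbabilityMeasure S → ℝ, Continuous F → (∃ C : ℝ, ∀ π, |F π| ≤ C) →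
      Tendsto (fun N => ∫ ω, F (μN N ω) ∂(P N)) atTop (nhds (∫ ω', F (μ ω') ∂P')))
    (k : ℕ)
    (gi : ℕ → S → ℝ) (hgicont : ∀ i < k, Continuous (gi i))
    (hgibdd : ∀ i < k, ∃ C : ℝ, ∀ x, |gi i x| ≤ C) :
    Tendsto
      (fun N => ∫ ω, ∏ i ∈ Finset.range k, gi i (X N i ω) ∂(P N)) atTop
      (nhds (∫ ω', ∏ i ∈ Finset.range k, ∫ x, gi i x ∂(μ ω' : Measure S) ∂P')) := by
  choose C hC using hgibdd
  let G (i : Fin k) : S →ᵇ ℝ :=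
    .ofNormedAddCommGroup (gi i) (hgicont i i.2) (C i i.2) (hC i i.2)
  let F (π : ProbabilityMeasure S) : ℝ := ∏ i, ∫ x, G i x ∂(π : Measure S)
  have hFcont : Continuous F := continuous_finsetProd _ fun i _ =>
    ProbabilityMeasure.continuous_integral_boundedContinuousFunction (G i)
  have hFbdd (π : ProbabilityMeasure S) : |F π| ≤ ∏ i, ‖G i‖ := by
    rw [← Real.norm_eq_abs, norm_prod]
    exact Finset.prod_le_prod (fun _ _ => norm_nonneg _) fun i _ =>
      (G i).norm_integral_le_norm (μ := (π : Measure S))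
  have hF := hconv F hFcont ⟨_, hFbdd⟩
  have hrate : Tendsto (fun N : ℕ => 2 * (∏ i, ‖G i‖) * (1 - N.descFactorial k / N ^ k))
      atTop (𝓝 0) := by
    simpa using ((tendsto_descFactorial_div_pow k).const_sub 1).const_mul (2 * ∏ i, ‖G i‖)
  simp_rw [← Fin.prod_univ_eq_prod_range]
  refine hF.congr_dist (squeeze_zero' (.of_forall fun _ => dist_nonneg) ?_ hrate)
  filter_upwards [eventually_ge_atTop k, eventually_gt_atTop 0] with N hkN hN
  rw [dist_comm, dist_eq_norm]
  simp_rw [F, hμN N hN]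
  exact norm_integral_prod_sub_integral_prod_empiricalMeasure_le (hXmeas N) (hexch N) hkN hN G

/-- Let `S` be a separable metrizable space. For each `N`, let
`X^{N,1}, …, X^{N,N}` be an exchangeable family of `S`-valued random variables with empirical
measure `μ^N = (1/N) ∑_{i<N} δ_{X^{N,i}}`, a random element of the space of Borel probability
measures on `S` with the weak topology. Let `μ` be a random Borel probability measure and
assume `E[F(μ^N)] → E[F(μ)]` for every bounded continuous `F`. Then for every `k ≥ 1` and all
bounded continuous `g_1, …, g_k : S → ℝ`,
`E[∏_{i<k} g_i(X^{N,i})] → E[∏_{i<k} ∫ g_i dμ]`; that is, the law of `(X^{N,1},…,X^{N,k})`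
converges weakly to the mixture `∫ m^{⊗k} Q(dm)` with `Q` the law of `μ`. -/
theorem stmt9 {S : Type*} [MeasurableSpace S] [TopologicalSpace S] [BorelSpace S]
    [TopologicalSpace.SeparableSpace S] [TopologicalSpace.PseudoMetrizableSpace S]
    (ΩN : ℕ → Type*) [∀ N, MeasurableSpace (ΩN N)]
    (P : ∀ N, Measure (ΩN N)) [∀ N, IsProbabilityMeasure (P N)]
    (X : ∀ N : ℕ, ℕ → ΩN N → S)
    (hXmeas : ∀ N, ∀ i < N, Measurable (X N i))
    (hexch : ∀ N (σ : Equiv.Perm (Fin N)),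
      Measure.map (fun ω (i : Fin N) => X N (σ i : ℕ) ω) (P N) =
        Measure.map (fun ω (i : Fin N) => X N (i : ℕ) ω) (P N))
    (μN : ∀ N : ℕ, ΩN N → ProbabilityMeasure S)
    (hμN : ∀ N : ℕ, 0 < N → ∀ ω, (μN N ω : Measure S) =
      (N : ℝ≥0∞)⁻¹ • ∑ i ∈ Finset.range N, Measure.dirac (X N i ω))
    {Ω' : Type*} [MeasurableSpace Ω'] (P' : Measure Ω') [IsProbabilityMeasure P']
    (μ : Ω' → ProbabilityMeasure S)
    (hconv : ∀ F : ProbabilityMeasure S → ℝ, Continuous F → (∃ C : ℝ, ∀ π, |F π| ≤ C) →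
      Tendsto (fun N => ∫ ω, F (μN N ω) ∂(P N)) atTop (nhds (∫ ω', F (μ ω') ∂P')))
    (k : ℕ) (hk : 1 ≤ k)
    (gi : ℕ → S → ℝ) (hgicont : ∀ i < k, Continuous (gi i))
    (hgibdd : ∀ i < k, ∃ C : ℝ, ∀ x, |gi i x| ≤ C) :
    Tendsto
      (fun N => ∫ ω, ∏ i ∈ Finset.range k, gi i (X N i ω) ∂(P N)) atTop
      (nhds (∫ ω', ∏ i ∈ Finset.range k, ∫ x, gi i x ∂(μ ω' : Measure S) ∂P')) :=
  stmt9_general ΩN P X hXmeas hexch μN hμN P' μ hconv k gi hgicont hgibdd
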